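/- Let K ≥ 2 and N ≥ 1 be coprime integers and let b = (b_1,…,b_K) be an ordered K-partition of N. Then, as vectors in ℝ^K, P_{𝟙⊥}ψ(b) − (N/K)ρ = −M·B·b, where b is regarded as a column vector in ℝ^K. -/

import Mathlib

open scoped BigOperators

/-- Cyclic successor on `Fin K`. -/
def cycSucc {K : ℕ} (i : Fin K) : Fin K := ⟨((i : ℕ) + 1) % K, Nat.mod_lt _ i.pos⟩

/-- The K×K matrix B with B_{ij} = (1/(2K))(−(K−1) + 2·((j−i) mod K)). -/
noncomputable def Bmat (K : ℕ) : Matrix (Fin K) (Fin K) ℝ :=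
  Matrix.of fun i j => (1 / (2 * (K : ℝ))) * (-((K : ℝ) - 1) + 2 * (((j - i : Fin K) : ℕ) : ℝ))

/-- The cyclic shift permutation matrix, M_{ij} = 1 iff j ≡ i+1 (mod K). -/
def Mmat (K : ℕ) : Matrix (Fin K) (Fin K) ℝ :=
  Matrix.of fun i j => if j = cycSucc i then 1 else 0

/-- The all-ones K×K matrix. -/
def Jmat (K : ℕ) : Matrix (Fin K) (Fin K) ℝ := Matrix.of fun _ _ => 1

/-- Orthogonal projection onto the hyperplane orthogonal to (1,…,1). -/
noncomputable def Pperp (K : ℕ) : Matrix (Fin K) (Fin K) ℝ := 1 - ((K : ℝ))⁻¹ • Jmat K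

/-- ψ(b) with i-th entry N − (b_1 + ⋯ + b_i)  (0-indexed). -/
noncomputable def psiVec (K N : ℕ) (b : Fin K → ℕ) : Fin K → ℝ :=
  fun i => (N : ℝ) - ∑ j ∈ Finset.Iic i, (b j : ℝ)

/-- ρ = (1/2)(K−1, K−3, …, 1−K). -/
noncomputable def rhoVec (K : ℕ) : Fin K → ℝ := fun i => ((K : ℝ) - 1 - 2 * (i : ℕ)) / 2


/-!
Coordinatewise both sides are linear in `b`. Since `ψ(b)_i = ∑_{j > i} b_j` and
`∑_i ψ(b)_i = ∑_j j b_j`, the coefficient of `b_j` in the `i`-th entry of the left side is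
`[i < j] - j/K - ρ_i/K`. On the right, `M` shifts rows, so the coefficient is `-B_{i+1,j}`, and
`(j - (i+1)) mod K = j - i - 1 + K [j ≤ i]` makes the two coefficients agree.
-/

lemma Pperp_mulVec_apply (K : ℕ) (v : Fin K → ℝ) (i : Fin K) :
    (Pperp K).mulVec v i = v i - (K : ℝ)⁻¹ * ∑ k, v k := by
  simp only [Pperp, Matrix.sub_mulVec, Matrix.one_mulVec, Matrix.smul_mulVec, Pi.sub_apply,
    Pi.smul_apply, smul_eq_mul]
  simp [Jmat, Matrix.mulVec, dotProduct]

lemma Mmat_mul_apply (K : ℕ) (A : Matrix (Fin K) (Fin K) ℝ) (i j : Fin K) :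
    (Mmat K * A) i j = A (cycSucc i) j := by
  simp [Mmat, Matrix.mul_apply]

lemma val_cycSucc {K : ℕ} (i : Fin K) :
    (cycSucc i : ℕ) = if (i : ℕ) + 1 = K then 0 else (i : ℕ) + 1 := by
  have := i.isLt
  split_ifs with h
  · simp [cycSucc, h]
  · exact Nat.mod_eq_of_lt (by omega)

lemma val_sub_cycSucc {K : ℕ} (i j : Fin K) :
    (((j - cycSucc i : Fin K) : ℕ) : ℝ) = j - i - 1 + if j ≤ i then (K : ℝ) else 0 := by
  have hi := i.isLt
  have hs := val_cycSucc i
  by_cases hji : j ≤ i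
  · rw [if_pos hji]
    rw [Fin.le_def] at hji
    by_cases hiK : (i : ℕ) + 1 = K
    · rw [if_pos hiK] at hs
      rw [Fin.coe_sub_iff_le.mpr (Fin.le_def.mpr (by omega)), hs, Nat.sub_zero]
      have hKR : (K : ℝ) = i + 1 := by exact_mod_cast hiK.symm
      rw [hKR]
      ring
    · rw [if_neg hiK] at hs
      rw [Fin.coe_sub_iff_lt.mpr (Fin.lt_def.mpr (by omega)), hs,
        Nat.cast_sub (by omega)]
      push_cast
      ring
  · rw [Fin.le_def] at hji
    have hiK : (i : ℕ) + 1 ≠ K := by omega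
    rw [if_neg hiK] at hs
    rw [if_neg (mt Fin.le_def.mp hji), Fin.coe_sub_iff_le.mpr (Fin.le_def.mpr (by omega)), hs,
      Nat.cast_sub (by omega)]
    push_cast
    ring

lemma psiVec_eq_sum_Ioi {K N : ℕ} {b : Fin K → ℕ} (hb : ∑ i, b i = N) (k : Fin K) :
    psiVec K N b k = ∑ j ∈ Finset.Ioi k, (b j : ℝ) := by
  have hcompl : (Finset.Iic k)ᶜ = Finset.Ioi k := by
    ext
    simp
  rw [psiVec, ← hb, Nat.cast_sum, ← Finset.sum_compl_add_sum (Finset.Iic k), hcompl]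
  ring

lemma sum_psiVec {K N : ℕ} {b : Fin K → ℕ} (hb : ∑ i, b i = N) :
    ∑ k, psiVec K N b k = ∑ j : Fin K, (j : ℝ) * b j := by
  simp_rw [psiVec_eq_sum_Ioi hb]
  rw [Finset.sum_comm' (s' := Finset.Iio) (t' := Finset.univ) (by simp)]
  simp

lemma Bmat_cycSucc_apply {K : ℕ} (i j : Fin K) :
    Bmat K (cycSucc i) j = rhoVec K i / K + j / K - if i < j then 1 else 0 := by
  have hK : (K : ℝ) ≠ 0 := by exact_mod_cast (Fin.pos i).ne'
  rw [Bmat, Matrix.of_apply, val_sub_cycSucc, rhoVec]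
  by_cases hij : i < j
  · rw [if_neg (not_le.mpr hij), if_pos hij]
    field_simp
    ring
  · rw [if_pos (not_lt.mp hij), if_neg hij]
    field_simp
    ring

theorem proj_psi_eq_neg_MBb_general (K N : ℕ) (b : Fin K → ℕ) (hb : ∑ i, b i = N) :
    (Pperp K).mulVec (psiVec K N b) - ((N : ℝ) / K) • rhoVec K
      = -((Mmat K * Bmat K).mulVec (fun j => (b j : ℝ))) := by
  have hN : (N : ℝ) = ∑ j, (b j : ℝ) := by exact_mod_cast hb.symm
  funext i
  rw [Pi.sub_apply, Pperp_mulVec_apply, psiVec_eq_sum_Ioi hb, sum_psiVec hb, hN,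
    ← Finset.filter_lt_eq_Ioi, Finset.sum_filter]
  simp only [Pi.smul_apply, Pi.neg_apply, smul_eq_mul, Matrix.mulVec, dotProduct,
    Mmat_mul_apply, Bmat_cycSucc_apply]
  rw [Finset.mul_sum, Finset.sum_div, Finset.sum_mul, ← Finset.sum_neg_distrib,
    ← Finset.sum_sub_distrib, ← Finset.sum_sub_distrib]
  refine Finset.sum_congr rfl fun j _ => ?_
  split_ifs <;> ring

theorem proj_psi_eq_neg_MBb (K N : ℕ) (hK : 2 ≤ K) (hN : 1 ≤ N)
    (hcop : Nat.Coprime K N) (b : Fin K → ℕ) (hb : ∑ i, b i = N) :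
    (Pperp K).mulVec (psiVec K N b) - ((N : ℝ) / K) • rhoVec K
      = -((Mmat K * Bmat K).mulVec (fun j => (b j : ℝ))) :=
  proj_psi_eq_neg_MBb_general K N b hb
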